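/- For every integer k ≥ 1, the element t_k = s_{1,2} · s_{1,4} · s_{1,8} ⋯ s_{1,2^k} (the product, in increasing order of j, of the generators s_{1,2^j} for j = 1, …, k) of the cactus group J_{2^k} has order exactly 2^k. -/

import Mathlib

/-- The set of intervals `[p,q]`, `1 ≤ p < q ≤ n`, indexing the generators `s_{p,q}`
of the cactus group `J_n`. -/
def cactusSet (n : ℕ) : Set (ℕ × ℕ) := {pq | 1 ≤ pq.1 ∧ pq.1 < pq.2 ∧ pq.2 ≤ n}

/-- The defining relations (j1)-(j3) of the cactus group, restricted to a collection `C`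
of generating intervals: exactly those cactus relations involving only generators from `C`. -/
def cactusRels (C : Set (ℕ × ℕ)) : Set (FreeGroup C) :=
  {w | (∃ a : C, w = FreeGroup.of a * FreeGroup.of a) ∨
    (∃ a b : C, (a.1.2 < b.1.1 ∨ b.1.2 < a.1.1) ∧
      w = FreeGroup.of a * FreeGroup.of b * (FreeGroup.of a)⁻¹ * (FreeGroup.of b)⁻¹) ∨
    (∃ a b c : C, a.1.1 ≤ b.1.1 ∧ b.1.2 ≤ a.1.2 ∧
      c.1.1 = a.1.1 + a.1.2 - b.1.2 ∧ c.1.2 = a.1.1 + a.1.2 - b.1.1 ∧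
      w = FreeGroup.of a * FreeGroup.of b * (FreeGroup.of a)⁻¹ * (FreeGroup.of c)⁻¹)}

/-- The group presented by the generators `s_I`, `I ∈ C`, and those cactus relations
involving only these generators. -/
abbrev PartialCactusGroup (C : Set (ℕ × ℕ)) := PresentedGroup (cactusRels C)

/-- The cactus group `J_n`. -/
abbrev CactusGroup (n : ℕ) := PartialCactusGroup (cactusSet n)


/-- The generator `s_{1,2^j}` of `J_{2^k}`. -/
def tGen (k j : ℕ) : CactusGroup (2 ^ k) :=
  if h : (1 : ℕ) < 2 ^ j ∧ 2 ^ j ≤ 2 ^ k then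
    PresentedGroup.of ⟨(1, 2 ^ j), ⟨le_refl 1, h.1, h.2⟩⟩
  else 1

/-- The element `t_k = s_{1,2} s_{1,4} s_{1,8} ⋯ s_{1,2^k}` of `J_{2^k}`. -/
def tElem (k : ℕ) : CactusGroup (2 ^ k) :=
  ((List.range k).map (fun j => tGen k (j + 1))).prod

/-!
Write `u` for the image of `t_k` in `J_{2^(k+1)}` and `s = s_{1,2^(k+1)}`, so that
`t_{k+1} = u s`. By (j3), `s u s` is a product of generators indexed by subintervals of
`[2^k + 1, 2^(k+1)]`, which commute with those of `u` by (j2). Hence `t_{k+1}^2 = u (s u s)`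
with commuting factors, and `t_k^(2^k) = 1` follows by induction.

Conversely, sending `s_{p,q}` to the reversal of `[p,q]` defines an action of `J_n` on `ℕ`.
On `[1, 2^k]` the square of the image of `t_{k+1}` agrees with the image of `t_k`, so by
induction `t_{k+1}^(2^k)` moves `1` to `2`, and the order of `t_{k+1}` is exactly `2^(k+1)`.
-/

-- The image of `s_{p,q}` under the standard action of `J_n` on `ℕ`; it is the identity off `[p,q]`.
def intervalRev (p q : ℕ) : Equiv.Perm ℕ :=
  Function.Involutive.toPerm (fun x => if p ≤ x ∧ x ≤ q then p + q - x else x) fun x => by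
    dsimp only; split_ifs <;> omega

lemma intervalRev_apply (p q x : ℕ) :
    intervalRev p q x = if p ≤ x ∧ x ≤ q then p + q - x else x := rfl

lemma intervalRev_mul_self (p q : ℕ) : intervalRev p q * intervalRev p q = 1 := by
  ext x; simp only [Equiv.Perm.mul_apply, intervalRev_apply, Equiv.Perm.one_apply]
  split_ifs <;> omega

lemma intervalRev_commute {p q m r : ℕ} (h : q < m ∨ r < p) :
    Commute (intervalRev p q) (intervalRev m r) := by
  ext x; simp only [Equiv.Perm.mul_apply, intervalRev_apply]
  split_ifs <;> omega

lemma intervalRev_conj {p q m r : ℕ} (hm : p ≤ m) (hr : r ≤ q) :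
    intervalRev p q * intervalRev m r * (intervalRev p q)⁻¹ =
      intervalRev (p + q - r) (p + q - m) := by
  rw [inv_eq_of_mul_eq_one_right (intervalRev_mul_self p q)]
  ext x; simp only [Equiv.Perm.mul_apply, intervalRev_apply]
  split_ifs <;> omega

namespace PartialCactusGroup

variable {C : Set (ℕ × ℕ)}

def lift {G : Type*} [Group G] (f : C → G) (h_sq : ∀ a, f a * f a = 1)
    (h_comm : ∀ a b : C, a.1.2 < b.1.1 ∨ b.1.2 < a.1.1 → Commute (f a) (f b))
    (h_conj : ∀ a b c : C, a.1.1 ≤ b.1.1 → b.1.2 ≤ a.1.2 →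
      c.1.1 = a.1.1 + a.1.2 - b.1.2 → c.1.2 = a.1.1 + a.1.2 - b.1.1 →
      f a * f b * (f a)⁻¹ = f c) :
    PartialCactusGroup C →* G :=
  PresentedGroup.toGroup (f := f) <| by
    rintro r (⟨a, rfl⟩ | ⟨a, b, hab, rfl⟩ | ⟨a, b, c, h₁, h₂, h₃, h₄, rfl⟩) <;>
      simp only [map_mul, map_inv, FreeGroup.lift_apply_of]
    · exact h_sq a
    · rw [(h_comm a b hab).eq]; group
    · rw [h_conj a b c h₁ h₂ h₃ h₄, mul_inv_cancel]

@[simp]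
lemma lift_of {G : Type*} [Group G] {f : C → G} {h_sq h_comm h_conj} (a : C) :
    lift f h_sq h_comm h_conj (PresentedGroup.of a) = f a :=
  PresentedGroup.toGroup.of _

lemma of_mul_self (a : C) :
    (PresentedGroup.of a : PartialCactusGroup C) * PresentedGroup.of a = 1 :=
  PresentedGroup.one_of_mem (Or.inl ⟨a, rfl⟩)

lemma of_commute {a b : C} (h : a.1.2 < b.1.1 ∨ b.1.2 < a.1.1) :
    Commute (PresentedGroup.of a : PartialCactusGroup C) (PresentedGroup.of b) :=
  PresentedGroup.mk_eq_mk_of_mul_inv_mem (Or.inr (Or.inl ⟨a, b, h, by group⟩))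

lemma of_conj {a b c : C} (h₁ : a.1.1 ≤ b.1.1) (h₂ : b.1.2 ≤ a.1.2)
    (h₃ : c.1.1 = a.1.1 + a.1.2 - b.1.2) (h₄ : c.1.2 = a.1.1 + a.1.2 - b.1.1) :
    (PresentedGroup.of a : PartialCactusGroup C) * PresentedGroup.of b *
      (PresentedGroup.of a)⁻¹ = PresentedGroup.of c :=
  PresentedGroup.mk_eq_mk_of_mul_inv_mem (Or.inr (Or.inr ⟨a, b, c, h₁, h₂, h₃, h₄, rfl⟩))

def inclusion {D : Set (ℕ × ℕ)} (h : C ⊆ D) : PartialCactusGroup C →* PartialCactusGroup D :=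
  lift (fun a => PresentedGroup.of ⟨a.1, h a.2⟩) (fun _ => of_mul_self _)
    (fun _ _ hab => of_commute hab) (fun _ _ _ h₁ h₂ h₃ h₄ => of_conj h₁ h₂ h₃ h₄)

@[simp]
lemma inclusion_of {D : Set (ℕ × ℕ)} (h : C ⊆ D) (a : C) :
    inclusion h (PresentedGroup.of a) = PresentedGroup.of ⟨a.1, h a.2⟩ :=
  lift_of a

def toPerm (C : Set (ℕ × ℕ)) : PartialCactusGroup C →* Equiv.Perm ℕ :=
  lift (fun a => intervalRev a.1.1 a.1.2) (fun _ => intervalRev_mul_self _ _)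
    (fun _ _ hab => intervalRev_commute hab)
    (fun _ _ _ h₁ h₂ h₃ h₄ => by rw [intervalRev_conj h₁ h₂, h₃, h₄])

end PartialCactusGroup

open PartialCactusGroup

lemma pow_two_mul_eq_one_of_commute_conj {G : Type*} [Group G] {u s : G} {n : ℕ}
    (hs : s * s = 1) (hu : u ^ n = 1) (hc : Commute u (s * u * s⁻¹)) :
    (u * s) ^ (n * 2) = 1 := by
  have hsq : (u * s) ^ 2 = u * (s * u * s⁻¹) := by
    rw [inv_eq_of_mul_eq_one_right hs, pow_two]; group
  rw [pow_mul', hsq, hc.mul_pow, conj_pow, hu, mul_one, one_mul, mul_inv_cancel]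

lemma cactusSet_mono : Monotone cactusSet :=
  fun _ _ h _ hx => ⟨hx.1, hx.2.1, hx.2.2.trans h⟩

def doubleInclusion (k : ℕ) : CactusGroup (2 ^ k) →* CactusGroup (2 ^ (k + 1)) :=
  inclusion (cactusSet_mono (Nat.pow_le_pow_right two_pos k.le_succ))

lemma one_two_pow_mem_cactusSet {j k : ℕ} (hj : 1 ≤ j) (hjk : j ≤ k) :
    (1, 2 ^ j) ∈ cactusSet (2 ^ k) :=
  ⟨le_rfl, Nat.one_lt_two_pow_iff.mpr (by omega), Nat.pow_le_pow_right two_pos hjk⟩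

lemma tGen_eq_of {j k : ℕ} (hj : 1 ≤ j) (hjk : j ≤ k) :
    tGen k j = PresentedGroup.of ⟨(1, 2 ^ j), one_two_pow_mem_cactusSet hj hjk⟩ :=
  dif_pos ⟨(one_two_pow_mem_cactusSet hj hjk).2.1, (one_two_pow_mem_cactusSet hj hjk).2.2⟩

lemma doubleInclusion_tGen {j k : ℕ} (hjk : j ≤ k) :
    doubleInclusion k (tGen k j) = tGen (k + 1) j := by
  rcases Nat.eq_zero_or_pos j with rfl | hj
  · simp [tGen]
  · rw [tGen_eq_of hj hjk, tGen_eq_of hj (by omega)]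
    exact inclusion_of _ _

lemma doubleInclusion_tElem (k : ℕ) :
    doubleInclusion k (tElem k) = ((List.range k).map fun j => tGen (k + 1) (j + 1)).prod := by
  rw [tElem, map_list_prod, List.map_map]
  exact congrArg List.prod <| List.map_congr_left fun j hj =>
    doubleInclusion_tGen (List.mem_range.mp hj)

lemma tElem_succ (k : ℕ) :
    tElem (k + 1) = doubleInclusion k (tElem k) * tGen (k + 1) (k + 1) := by
  rw [doubleInclusion_tElem, tElem, List.range_succ, List.map_append, List.prod_append]
  simp

-- By (j3) the conjugate is `s_{2^(k+1)+1-2^j, 2^(k+1)}`, which lies right of `[1, 2^k]`.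
lemma commute_tGen_conj_tGen {i j k : ℕ} (hi : 1 ≤ i) (hik : i ≤ k) (hj : 1 ≤ j) (hjk : j ≤ k) :
    Commute (tGen (k + 1) i)
      (tGen (k + 1) (k + 1) * tGen (k + 1) j * (tGen (k + 1) (k + 1))⁻¹) := by
  have hi' : 2 ^ i ≤ 2 ^ k := Nat.pow_le_pow_right two_pos hik
  have hj' : 2 ^ j ≤ 2 ^ k := Nat.pow_le_pow_right two_pos hjk
  have hk : 2 ^ (k + 1) = 2 ^ k + 2 ^ k := by ring
  have hj'' : 2 ≤ 2 ^ j := Nat.le_self_pow (by omega) 2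
  have hc : (2 ^ (k + 1) + 1 - 2 ^ j, 2 ^ (k + 1)) ∈ cactusSet (2 ^ (k + 1)) :=
    ⟨by omega, by omega, le_rfl⟩
  rw [tGen_eq_of hi (by omega), tGen_eq_of hj (by omega), tGen_eq_of (by omega) le_rfl,
    of_conj (c := ⟨_, hc⟩) ?_ ?_ ?_ ?_]
  · exact of_commute (Or.inl (by dsimp; omega))
  all_goals dsimp; omega

lemma commute_doubleInclusion_tElem_conj (k : ℕ) :
    Commute (doubleInclusion k (tElem k))
      (tGen (k + 1) (k + 1) * doubleInclusion k (tElem k) * (tGen (k + 1) (k + 1))⁻¹) := by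
  rw [← MulAut.conj_apply, doubleInclusion_tElem, map_list_prod, List.map_map]
  refine Commute.list_prod_left _ _ fun x hx => Commute.list_prod_right _ _ fun y hy => ?_
  obtain ⟨i, hi, rfl⟩ := List.mem_map.mp hx
  obtain ⟨j, hj, rfl⟩ := List.mem_map.mp hy
  exact commute_tGen_conj_tGen (by omega) (List.mem_range.mp hi) (by omega)
    (List.mem_range.mp hj)

lemma tElem_pow_two_pow (k : ℕ) : tElem k ^ 2 ^ k = 1 := by
  induction k with
  | zero => simp [tElem]
  | succ k ih =>
    rw [tElem_succ]
    refine pow_two_mul_eq_one_of_commute_conj (n := 2 ^ k) ?_ (by rw [← map_pow, ih, map_one])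
      (commute_doubleInclusion_tElem_conj k)
    rw [tGen_eq_of (by omega) le_rfl]
    exact of_mul_self _

def tPerm (k : ℕ) : Equiv.Perm ℕ :=
  ((List.range k).map fun j => intervalRev 1 (2 ^ (j + 1))).prod

lemma toPerm_tElem (k : ℕ) : toPerm _ (tElem k) = tPerm k := by
  rw [tElem, map_list_prod, List.map_map, tPerm]
  refine congrArg List.prod <| List.map_congr_left fun j hj => ?_
  rw [Function.comp_apply, tGen_eq_of (by omega) (List.mem_range.mp hj)]
  exact lift_of _

lemma tPerm_succ (k : ℕ) : tPerm (k + 1) = tPerm k * intervalRev 1 (2 ^ (k + 1)) := by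
  rw [tPerm, List.range_succ, List.map_append, List.prod_append]
  simp [tPerm]

lemma tPerm_apply_of_notMem {k x : ℕ} (hx : x ∉ Set.Icc 1 (2 ^ k)) : tPerm k x = x := by
  induction k with
  | zero => simp [tPerm]
  | succ k ih =>
    have hk : 2 ^ k < 2 ^ (k + 1) := Nat.pow_lt_pow_right one_lt_two k.lt_succ_self
    simp only [Set.mem_Icc, not_and_or, not_le] at hx ih
    rw [tPerm_succ, Equiv.Perm.mul_apply, intervalRev_apply, if_neg (by omega), ih (by omega)]

lemma tPerm_mapsTo (k : ℕ) : Set.MapsTo (tPerm k) (Set.Icc 1 (2 ^ k)) (Set.Icc 1 (2 ^ k)) := by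
  intro x hx
  by_contra h
  exact h (by rwa [(tPerm k).injective (tPerm_apply_of_notMem h)])

lemma tPerm_succ_apply_of_mem {k x : ℕ} (hx : x ∈ Set.Icc 1 (2 ^ k)) :
    tPerm (k + 1) x = 2 ^ (k + 1) + 1 - x := by
  have hk : 2 ^ (k + 1) = 2 ^ k + 2 ^ k := by ring
  rw [Set.mem_Icc] at hx
  rw [tPerm_succ, Equiv.Perm.mul_apply, intervalRev_apply, if_pos (by omega),
    tPerm_apply_of_notMem (by rw [Set.mem_Icc]; omega)]
  omega

lemma tPerm_succ_sq_apply_of_mem {k x : ℕ} (hx : x ∈ Set.Icc 1 (2 ^ k)) :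
    (tPerm (k + 1) ^ 2) x = tPerm k x := by
  have hk : 2 ^ (k + 1) = 2 ^ k + 2 ^ k := by ring
  rw [Set.mem_Icc] at hx
  rw [pow_two, Equiv.Perm.mul_apply, tPerm_succ_apply_of_mem hx, tPerm_succ,
    Equiv.Perm.mul_apply, intervalRev_apply, if_pos (by omega)]
  congr 1; omega

lemma tPerm_succ_pow_two_mul_apply_of_mem {k x : ℕ} (m : ℕ) (hx : x ∈ Set.Icc 1 (2 ^ k)) :
    (tPerm (k + 1) ^ (2 * m)) x = (tPerm k ^ m) x := by
  induction m generalizing x with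
  | zero => rfl
  | succ m ih =>
    rw [mul_add, mul_one, pow_add, Equiv.Perm.mul_apply, tPerm_succ_sq_apply_of_mem hx,
      ih (tPerm_mapsTo k hx), pow_succ, Equiv.Perm.mul_apply]

lemma tPerm_succ_pow_apply_one (k : ℕ) : (tPerm (k + 1) ^ 2 ^ k) 1 = 2 := by
  induction k with
  | zero => rfl
  | succ k ih =>
    rw [pow_succ', tPerm_succ_pow_two_mul_apply_of_mem _ ⟨le_rfl, Nat.one_le_two_pow⟩, ih]

/-- For every `k ≥ 1`, the element `t_k = s_{1,2} s_{1,4} ⋯ s_{1,2^k}` of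
`J_{2^k}` has order exactly `2^k`. -/
theorem cactus_two_torsion (k : ℕ) (hk : 1 ≤ k) : orderOf (tElem k) = 2 ^ k := by
  obtain ⟨n, rfl⟩ := Nat.exists_eq_add_of_le' hk
  refine orderOf_eq_prime_pow (fun h => ?_) (tElem_pow_two_pow _)
  have h_one_two := tPerm_succ_pow_apply_one n
  rw [← toPerm_tElem, ← map_pow, h, map_one (toPerm _), Equiv.Perm.one_apply] at h_one_two
  omega
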